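/- Consider an ALG-schedule and a reference time t ≥ 0. Let j ∈ N(t) and let (j,k) be an E_N-edge of the borrow graph. Then ȳ_j ≥ ȳ_k, where ȳ_j = min(y_j(t), α·(p j)); moreover, if k ∉ N(t) then y_j(t) ≥ y_k(s_k). -/

import Mathlib

open MeasureTheory Set

open scoped Classical

noncomputable section

variable {J : Type*}

/-- Total work done on job `j` by time `u` under the schedule `σ`. -/
def workDone (σ : ℝ → J → ℝ) (j : J) (u : ℝ) : ℝ := ∫ v in (0:ℝ)..u, σ v j

/-- Remaining processing time of job `j` at time `u`. -/
def remT (p : J → ℝ) (σ : ℝ → J → ℝ) (j : J) (u : ℝ) : ℝ := p j - workDone σ j u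

/-- Completion time of job `j`: the least `u` with `workDone σ j u = p j`,
    and `⊤` if the job never completes. -/
def cTime (p : J → ℝ) (σ : ℝ → J → ℝ) (j : J) : EReal :=
  sInf ((fun v : ℝ => (v : EReal)) '' {v : ℝ | workDone σ j v = p j})

/-- Job `j` is available at time `u`: released and not yet completed. -/
def availAt (r p : J → ℝ) (σ : ℝ → J → ℝ) (u : ℝ) (j : J) : Prop :=
  r j ≤ u ∧ (u : EReal) < cTime p σ j

/-- Job `j` is processed at time `u`. -/
def procAt (σ : ℝ → J → ℝ) (u : ℝ) (j : J) : Prop := 0 < σ u j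

/-- Job `j` is non-clairvoyant at time `u`. -/
def ncAt (r p : J → ℝ) (α : ℝ) (σ : ℝ → J → ℝ) (u : ℝ) (j : J) : Prop :=
  availAt r p σ u j ∧ workDone σ j u ≤ α * p j

/-- Job `j` is clairvoyant at time `u`. -/
def clAt (r p : J → ℝ) (α : ℝ) (σ : ℝ → J → ℝ) (u : ℝ) (j : J) : Prop :=
  availAt r p σ u j ∧ α * p j < workDone σ j u

/-- The time at which job `j` emits its signal: the least `u` with
    `workDone σ j u = α * p j`. -/
def emitT (p : J → ℝ) (α : ℝ) (σ : ℝ → J → ℝ) (j : J) : ℝ :=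
  sInf {u : ℝ | workDone σ j u = α * p j}

/-- Data of an instance: nonnegative release dates, positive processing times
    and `α ∈ (0,1)`. -/
structure IsInstance (r p : J → ℝ) (α : ℝ) : Prop where
  r_nonneg : ∀ j, 0 ≤ r j
  p_pos : ∀ j, 0 < p j
  alpha_mem : α ∈ Set.Ioo (0 : ℝ) 1

/-- `σ` is a (feasible, preemptive, single machine) schedule. -/
structure IsSchedule [Fintype J] (r p : J → ℝ) (σ : ℝ → J → ℝ) : Prop where
  meas : ∀ j, Measurable fun u => σ u j
  nonneg : ∀ u j, 0 ≤ σ u j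
  sum_le_one : ∀ u, ∑ j, σ u j ≤ 1
  zero_before_release : ∀ u j, u < r j → σ u j = 0
  workDone_le : ∀ u j, workDone σ j u ≤ p j

/-- A schedule is non-idling if it uses the full machine capacity whenever
    some job is available. -/
def NonIdling [Fintype J] (r p : J → ℝ) (σ : ℝ → J → ℝ) : Prop :=
  ∀ u, (∃ j, availAt r p σ u j) → ∑ j, σ u j = 1

/-- The SRPT condition at time `u`: `Cl(u) ≠ ∅` and
    `min_{j ∈ Cl(u)} p_j(u) ≤ ((1-α)/α) · min_{j ∈ N(u)} y_j(u)`
    (the minimum over the empty set being `+∞`). -/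
def SrptCond (r p : J → ℝ) (α : ℝ) (σ : ℝ → J → ℝ) (u : ℝ) : Prop :=
  ∃ k, clAt r p α σ u k ∧
    ∀ j, ncAt r p α σ u j → remT p σ k u ≤ ((1 - α) / α) * workDone σ j u

/-- `k` is a clairvoyant job of minimal remaining processing time at `u`,
    emitting last among those. -/
def IsSrptChoice (r p : J → ℝ) (α : ℝ) (σ : ℝ → J → ℝ) (u : ℝ) (k : J) : Prop :=
  clAt r p α σ u k ∧
    (∀ j, clAt r p α σ u j → remT p σ k u ≤ remT p σ j u) ∧
    (∀ j, clAt r p α σ u j → remT p σ j u = remT p σ k u →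
      emitT p α σ j ≤ emitT p α σ k)

/-- `j` is a non-clairvoyant job with minimal progress at time `u`. -/
def IsMinNc (r p : J → ℝ) (α : ℝ) (σ : ℝ → J → ℝ) (u : ℝ) (j : J) : Prop :=
  ncAt r p α σ u j ∧ ∀ j', ncAt r p α σ u j' → workDone σ j u ≤ workDone σ j' u

/-- `σ` is an ALG-schedule: non-idling, and at any time with available jobs it
    either runs a single clairvoyant job of shortest remaining processing time
    (breaking ties by latest emission) when the SRPT condition holds, or it runs
    exactly the non-clairvoyant jobs of minimal progress at equal rates. -/
structure IsALG [Fintype J] (r p : J → ℝ) (α : ℝ) (σ : ℝ → J → ℝ) : Prop where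
  sched : IsSchedule r p σ
  nonidling : NonIdling r p σ
  srpt_branch : ∀ u, (∃ j, availAt r p σ u j) → SrptCond r p α σ u →
    ∃ k, IsSrptChoice r p α σ u k ∧ ∀ j, j ≠ k → σ u j = 0
  setf_branch : ∀ u, (∃ j, availAt r p σ u j) → ¬ SrptCond r p α σ u →
    (∀ j, procAt σ u j → IsMinNc r p α σ u j) ∧
    (∀ j j', IsMinNc r p α σ u j → IsMinNc r p α σ u j' → σ u j = σ u j')

/-- Right endpoint `min (C_j, t)` of the lifetime of `j` w.r.t. reference time `t`. -/
def lifeEnd (p : J → ℝ) (σ : ℝ → J → ℝ) (t : ℝ) (j : J) : ℝ :=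
  (min (cTime p σ j) (t : EReal)).toReal

/-- The lifetime `I_j = [r j, min (C_j, t)]` of job `j`. -/
def lifetime (r p : J → ℝ) (σ : ℝ → J → ℝ) (t : ℝ) (j : J) : Set ℝ :=
  Set.Icc (r j) (lifeEnd p σ t j)

/-- `E_N`-edge of the borrow graph: `i` is processed at some time of `I_j`
    while being non-clairvoyant. -/
def ENedge (r p : J → ℝ) (α : ℝ) (σ : ℝ → J → ℝ) (t : ℝ) (j i : J) : Prop :=
  ∃ u ∈ lifetime r p σ t j, procAt σ u i ∧ ncAt r p α σ u i

/-- `E_C`-edge of the borrow graph: `i` is processed at some time of `I_j`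
    while being clairvoyant. -/
def ECedge (r p : J → ℝ) (α : ℝ) (σ : ℝ → J → ℝ) (t : ℝ) (j i : J) : Prop :=
  ∃ u ∈ lifetime r p σ t j, procAt σ u i ∧ clAt r p α σ u i

/-- Edge of the borrow graph `G_B`. -/
def borrowEdge (r p : J → ℝ) (α : ℝ) (σ : ℝ → J → ℝ) (t : ℝ) (j i : J) : Prop :=
  ENedge r p α σ t j i ∨ ECedge r p α σ t j i

/-- `reaches j i` iff `i ∈ R_j`, i.e. `i` is reachable from `j` in the borrow
    graph (`j` itself included). -/
def reaches (r p : J → ℝ) (α : ℝ) (σ : ℝ → J → ℝ) (t : ℝ) : J → J → Prop :=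
  Relation.ReflTransGen (borrowEdge r p α σ t)

/-- Truncated progress `ȳ_j = min (y_j(t), α p_j)`. -/
def truncY (p : J → ℝ) (α : ℝ) (σ : ℝ → J → ℝ) (t : ℝ) (j : J) : ℝ :=
  min (workDone σ j t) (α * p j)

end

/-!
The edge gives a time `u` in the lifetime of `j` at which `k` is run while both jobs are
non-clairvoyant; ALG only runs non-clairvoyant jobs of least progress, so `y_k(u) ≤ y_j(u)`.
From then on `j` stays non-clairvoyant until `t`, and whenever `k` is non-clairvoyant and
strictly ahead of `j`, ALG does not run `k`: its progress cannot rise above that of `j`. Hence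
`y_k ≤ y_j` holds at `t`, or at the moment `y_k` reaches `α p_k = y_k(s_k)`.
-/

theorem le_of_no_gain_while_ahead {g z : ℝ → ℝ} {u t : ℝ} (hut : u ≤ t)
    (hg : ContinuousOn g (Icc u t)) (hz : ContinuousOn z (Icc u t))
    (hzm : MonotoneOn z (Icc u t)) (hu : g u ≤ z u)
    (hgain : ∀ a b, u ≤ a → a < b → b ≤ t → (∀ v ∈ Ioo a b, z v < g v) → g b ≤ g a) :
    g t ≤ z t := by
  set S := {v | v ∈ Icc u t ∧ g v ≤ z v}
  have hS : IsClosed S := isClosed_Icc.isClosed_le hg hz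
  have hSne : S.Nonempty := ⟨u, ⟨le_rfl, hut⟩, hu⟩
  have hSbdd : BddAbove S := ⟨t, fun v hv => hv.1.2⟩
  obtain ⟨⟨huw, hwt⟩, hw⟩ := hS.csSup_mem hSne hSbdd
  rcases hwt.eq_or_lt with hweq | hwlt
  · rwa [← hweq]
  have ahead : ∀ v ∈ Ioo (sSup S) t, z v < g v := fun v hv =>
    lt_of_not_ge fun hle => hv.1.not_ge (le_csSup hSbdd ⟨⟨huw.trans hv.1.le, hv.2.le⟩, hle⟩)
  calc g t ≤ g (sSup S) := hgain _ _ huw hwlt le_rfl ahead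
    _ ≤ z (sSup S) := hw
    _ ≤ z t := hzm ⟨huw, hwt⟩ ⟨hut, le_rfl⟩ hwt

theorem apply_csInf_setOf_eq_of_monotone {f : ℝ → ℝ} {a b c : ℝ} (hf : Continuous f)
    (hm : Monotone f) (ha : f a < c) (hb : c ≤ f b) : f (sInf {x | f x = c}) = c := by
  have hab : a ≤ b := (hm.reflect_lt (ha.trans_le hb)).le
  obtain ⟨x, -, hx⟩ := intermediate_value_Icc hab hf.continuousOn ⟨ha.le, hb⟩
  have hbdd : BddBelow {x | f x = c} :=
    ⟨a, fun y (hy : f y = c) => (hm.reflect_lt (hy ▸ ha)).le⟩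
  exact (isClosed_eq hf continuous_const).csInf_mem ⟨x, hx⟩ hbdd

section

variable {J : Type*} {r p : J → ℝ} {α : ℝ} {σ : ℝ → J → ℝ}

theorem IsInstance.alpha_mul_pos (hinst : IsInstance r p α) (j : J) : 0 < α * p j :=
  mul_pos hinst.alpha_mem.1 (hinst.p_pos j)

theorem IsInstance.alpha_mul_lt (hinst : IsInstance r p α) (j : J) : α * p j < p j :=
  mul_lt_of_lt_one_left (hinst.p_pos j) hinst.alpha_mem.2

theorem workDone_zero (j : J) : workDone σ j 0 = 0 := by
  simp [workDone]

theorem lifeEnd_eq_of_availAt {t : ℝ} {j : J} (hj : availAt r p σ t j) : lifeEnd p σ t j = t := by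
  rw [lifeEnd, min_eq_right hj.2.le, EReal.toReal_coe]

variable [Fintype J]

namespace IsSchedule

theorem le_one (hs : IsSchedule r p σ) (u : ℝ) (j : J) : σ u j ≤ 1 :=
  (Finset.single_le_sum (fun i _ => hs.nonneg u i) (Finset.mem_univ j)).trans (hs.sum_le_one u)

theorem intervalIntegrable (hs : IsSchedule r p σ) (j : J) (a b : ℝ) :
    IntervalIntegrable (fun u => σ u j) volume a b := by
  refine IntervalIntegrable.mono_fun' (g := fun _ => (1 : ℝ)) intervalIntegrable_const
    (hs.meas j).aestronglyMeasurable (Filter.Eventually.of_forall fun u => ?_)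
  simpa [abs_of_nonneg (hs.nonneg u j)] using hs.le_one u j

theorem workDone_sub_workDone (hs : IsSchedule r p σ) (j : J) (a b : ℝ) :
    workDone σ j b - workDone σ j a = ∫ v in a..b, σ v j :=
  intervalIntegral.integral_interval_sub_left (hs.intervalIntegrable j 0 b)
    (hs.intervalIntegrable j 0 a)

theorem monotone_workDone (hs : IsSchedule r p σ) (j : J) : Monotone (workDone σ j) := by
  intro a b hab
  have := hs.workDone_sub_workDone j a b
  have : 0 ≤ ∫ v in a..b, σ v j := intervalIntegral.integral_nonneg hab fun v _ => hs.nonneg v j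
  linarith

theorem continuous_workDone (hs : IsSchedule r p σ) (j : J) : Continuous (workDone σ j) :=
  intervalIntegral.continuous_primitive (hs.intervalIntegrable j) 0

theorem workDone_eq_of_forall_Ioo_eq_zero (hs : IsSchedule r p σ) {j : J} {a b : ℝ}
    (hab : a ≤ b) (hidle : ∀ v ∈ Ioo a b, σ v j = 0) : workDone σ j b = workDone σ j a := by
  have hzero : ∫ v in a..b, σ v j = 0 := by
    rw [intervalIntegral.integral_of_le hab, integral_Ioc_eq_integral_Ioo]
    exact setIntegral_eq_zero_of_forall_eq_zero hidle
  linarith [hs.workDone_sub_workDone j a b]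

theorem lt_cTime (hs : IsSchedule r p σ) {j : J} {v : ℝ} (hv : workDone σ j v < p j) :
    (v : EReal) < cTime p σ j := by
  obtain ⟨v', hvv', hv'⟩ :=
    ((hs.continuous_workDone j).continuousAt.eventually_lt continuousAt_const hv).exists_gt
  refine (EReal.coe_lt_coe_iff.2 hvv').trans_le (le_sInf ?_)
  rintro _ ⟨x, hx : workDone σ j x = p j, rfl⟩
  exact EReal.coe_le_coe_iff.2 (hs.monotone_workDone j |>.reflect_lt (hx ▸ hv')).le

theorem ncAt_of_workDone_le (hs : IsSchedule r p σ) {j : J} {v : ℝ} (hr : r j ≤ v)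
    (hy : workDone σ j v ≤ α * p j) (hαp : α * p j < p j) : ncAt r p α σ v j :=
  ⟨⟨hr, hs.lt_cTime (hy.trans_lt hαp)⟩, hy⟩

theorem ncAt_of_le (hs : IsSchedule r p σ) {j : J} {v t : ℝ} (hj : ncAt r p α σ t j)
    (hr : r j ≤ v) (hvt : v ≤ t) : ncAt r p α σ v j :=
  ⟨⟨hr, (EReal.coe_le_coe_iff.2 hvt).trans_lt hj.1.2⟩,
    (hs.monotone_workDone j hvt).trans hj.2⟩

end IsSchedule

namespace IsALG

theorem workDone_le_of_procAt (halg : IsALG r p α σ) {v : ℝ} {k j : J} (hk : ncAt r p α σ v k)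
    (hj : ncAt r p α σ v j) (hp : procAt σ v k) : workDone σ k v ≤ workDone σ j v := by
  have havail : ∃ i, availAt r p σ v i := ⟨j, hj.1⟩
  by_cases hS : SrptCond r p α σ v
  · obtain ⟨k', ⟨hk', -⟩, hidle⟩ := halg.srpt_branch v havail hS
    obtain rfl | hkk := eq_or_ne k k'
    · exact absurd hk.2 hk'.2.not_ge
    · exact absurd hp (by simp [procAt, hidle k hkk])
  · exact ((halg.setf_branch v havail hS).1 k hp).2 j hj

theorem eq_zero_of_workDone_lt (halg : IsALG r p α σ) {v : ℝ} {k j : J} (hk : ncAt r p α σ v k)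
    (hj : ncAt r p α σ v j) (hlt : workDone σ j v < workDone σ k v) : σ v k = 0 :=
  ((halg.sched.nonneg v k).eq_or_lt.resolve_right fun hp =>
    (halg.workDone_le_of_procAt hk hj hp).not_gt hlt).symm

theorem workDone_le_of_ncAt_on (halg : IsALG r p α σ) {u m : ℝ} {j k : J} (hum : u ≤ m)
    (hk : ncAt r p α σ u k) (hpk : procAt σ u k) (hj : ∀ v ∈ Icc u m, ncAt r p α σ v j)
    (hkm : workDone σ k m ≤ α * p k) (hαp : α * p k < p k) :
    workDone σ k m ≤ workDone σ j m := by
  have hs := halg.sched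
  refine le_of_no_gain_while_ahead hum (hs.continuous_workDone k).continuousOn
    (hs.continuous_workDone j).continuousOn ((hs.monotone_workDone j).monotoneOn _)
    (halg.workDone_le_of_procAt hk (hj u ⟨le_rfl, hum⟩) hpk) fun a b hua hab hbm hahead => ?_
  refine (hs.workDone_eq_of_forall_Ioo_eq_zero hab.le fun v hv => ?_).le
  have hkv : ncAt r p α σ v k := hs.ncAt_of_workDone_le (hk.1.1.trans (hua.trans hv.1.le))
    ((hs.monotone_workDone k (hv.2.le.trans hbm)).trans hkm) hαp
  exact halg.eq_zero_of_workDone_lt hkv (hj v ⟨hua.trans hv.1.le, hv.2.le.trans hbm⟩)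
    (hahead v hv)

end IsALG

theorem min_workDone_le_of_ENedge (hinst : IsInstance r p α) (halg : IsALG r p α σ) {t : ℝ}
    {j k : J} (hj : ncAt r p α σ t j) (he : ENedge r p α σ t j k) :
    min (workDone σ k t) (α * p k) ≤ workDone σ j t := by
  obtain ⟨u, ⟨hru, hut⟩, hpk, hk⟩ := he
  rw [lifeEnd_eq_of_availAt hj.1] at hut
  have hs := halg.sched
  have hj_on : ∀ v ∈ Icc u t, ncAt r p α σ v j := fun v hv =>
    hs.ncAt_of_le hj (hru.trans hv.1) hv.2
  rcases le_or_gt (workDone σ k t) (α * p k) with hkt | hkt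
  · exact (min_le_left _ _).trans
      (halg.workDone_le_of_ncAt_on hut hk hpk hj_on hkt (hinst.alpha_mul_lt k))
  obtain ⟨m, hm, hkm⟩ := intermediate_value_Icc hut (hs.continuous_workDone k).continuousOn
    ⟨hk.2, hkt.le⟩
  calc min (workDone σ k t) (α * p k) ≤ workDone σ k m := (min_le_right _ _).trans hkm.ge
    _ ≤ workDone σ j m := halg.workDone_le_of_ncAt_on hm.1 hk hpk
        (fun v hv => hj_on v ⟨hv.1, hv.2.trans hm.2⟩) hkm.le (hinst.alpha_mul_lt k)
    _ ≤ workDone σ j t := hs.monotone_workDone j hm.2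

end

theorem stmt12_general {J : Type*} [Fintype J] {r p : J → ℝ} {α : ℝ} {σ : ℝ → J → ℝ}
    (hinst : IsInstance r p α) (halg : IsALG r p α σ) (t : ℝ)
    (j k : J) (hj : ncAt r p α σ t j) (he : ENedge r p α σ t j k) :
    truncY p α σ t k ≤ truncY p α σ t j ∧
      (¬ ncAt r p α σ t k → workDone σ k (emitT p α σ k) ≤ workDone σ j t) := by
  have hs := halg.sched
  have hmain := min_workDone_le_of_ENedge hinst halg hj he
  refine ⟨by rwa [truncY, truncY, min_eq_left hj.2], fun hk => ?_⟩
  have hrk : r k ≤ t := by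
    obtain ⟨u, hu, -, hku⟩ := he
    exact hku.1.1.trans (hu.2.trans (lifeEnd_eq_of_availAt hj.1).le)
  have hkt : α * p k ≤ workDone σ k t :=
    le_of_not_gt fun hlt => hk (hs.ncAt_of_workDone_le hrk hlt.le (hinst.alpha_mul_lt k))
  have hemit : workDone σ k (emitT p α σ k) = α * p k :=
    apply_csInf_setOf_eq_of_monotone (hs.continuous_workDone k) (hs.monotone_workDone k)
      (workDone_zero k ▸ hinst.alpha_mul_pos k) hkt
  rw [hemit]
  exact (min_eq_right hkt).symm.le.trans hmain

/-- If `j ∈ N(t)` and `(j,k)` is an `E_N`-edge of the borrow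
graph, then `ȳ_j ≥ ȳ_k`; moreover if `k ∉ N(t)` then `y_j(t) ≥ y_k(s_k)`. -/
theorem stmt12 {J : Type*} [Fintype J] {r p : J → ℝ} {α : ℝ} {σ : ℝ → J → ℝ}
    (hinst : IsInstance r p α) (halg : IsALG r p α σ) (t : ℝ) (ht : 0 ≤ t)
    (j k : J) (hj : ncAt r p α σ t j) (he : ENedge r p α σ t j k) :
    truncY p α σ t k ≤ truncY p α σ t j ∧
      (¬ ncAt r p α σ t k → workDone σ k (emitT p α σ k) ≤ workDone σ j t) :=
  stmt12_general hinst halg t j k hj he
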